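/- For every j₀ ∈ {0,1,…,k-1} one has (1/4)·∑_{j=j₀+2}^{k-1} (t_{j+1} - t_j)²/(t_j - t_{j₀+1})² ≤ 872. -/

import Mathlib

/-!
The density `g s / √(1 - s ^ 2)` factors as `φ s * (√(1 + s))⁻¹` with `φ s = g s / √(1 - s)`
nondecreasing. Freezing `φ` at `b = t j` bounds the mass of `[a, b] = [t (j₀ + 1), t j]` from
above and that of `[b, c] = [t j, t (j + 1)]` from below by explicit integrals of `(√(1 + s))⁻¹`.
Since the first interval carries `m = j - j₀ - 1` times the mass of the second,
`m (√(1 + c) - √(1 + b)) ≤ √(1 + b) - √(1 + a)`, which forces `(c - b) / (b - a) ≤ 3 / m`.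
The sum is then at most `9 ∑ 1 / m² ≤ 18`.
-/

open Real MeasureTheory Set

theorem intervalIntegrable_inv_sqrt_one_add {a b : ℝ} (ha : -1 < a) (hab : a ≤ b) :
    IntervalIntegrable (fun s ↦ (√(1 + s))⁻¹) volume a b := by
  refine (ContinuousOn.inv₀ (by fun_prop) fun x hx ↦ (sqrt_pos.2 ?_).ne').intervalIntegrable
  rw [uIcc_of_le hab] at hx
  linarith [hx.1]

theorem integral_inv_sqrt_one_add {a b : ℝ} (ha : -1 < a) (hab : a ≤ b) :
    ∫ s in a..b, (√(1 + s))⁻¹ = 2 * √(1 + b) - 2 * √(1 + a) := by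
  refine intervalIntegral.integral_eq_sub_of_hasDerivAt (f := fun s ↦ 2 * √(1 + s))
    (fun x hx ↦ ?_) (intervalIntegrable_inv_sqrt_one_add ha hab)
  rw [uIcc_of_le hab] at hx
  have := (((hasDerivAt_id' x).const_add 1).sqrt (by linarith [hx.1])).const_mul 2
  exact this.congr_deriv (by ring)

theorem div_sqrt_one_sub_sq (x : ℝ) {s : ℝ} (hs : s ≤ 1) :
    x / √(1 - s ^ 2) = x / √(1 - s) * (√(1 + s))⁻¹ := by
  rw [show 1 - s ^ 2 = (1 - s) * (1 + s) by ring, sqrt_mul (by linarith), div_mul_eq_div_div,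
    div_eq_mul_inv]

theorem sq_sub_sq_div_sq_sub_sq_le {A B C m : ℝ} (hA : 0 ≤ A) (hAB : A < B) (hBC : B ≤ C)
    (hm : 1 ≤ m) (h : m * (C - B) ≤ B - A) :
    (C ^ 2 - B ^ 2) / (B ^ 2 - A ^ 2) ≤ 3 / m := by
  have hu : 0 < B - A := by linarith
  have hv : C - B ≤ B - A := by nlinarith
  rw [div_le_div_iff₀ (by nlinarith) (by linarith)]
  calc (C ^ 2 - B ^ 2) * m = m * (C - B) * (2 * B + (C - B)) := by ring
    _ ≤ (B - A) * (2 * B + (B - A)) := by gcongr; linarith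
    _ ≤ 3 * (B ^ 2 - A ^ 2) := by nlinarith

theorem sum_Ico_inv_sq_sub_le (a N : ℕ) :
    ∑ j ∈ Finset.Ico (a + 1) N, (((j - a : ℕ) : ℝ) ^ 2)⁻¹ ≤ 2 := by
  calc ∑ j ∈ Finset.Ico (a + 1) N, (((j - a : ℕ) : ℝ) ^ 2)⁻¹
      ≤ ∑ j ∈ Finset.Ico (1 + a) (N + a), (((j - a : ℕ) : ℝ) ^ 2)⁻¹ := by
        rw [add_comm 1 a]
        exact Finset.sum_le_sum_of_subset_of_nonneg (Finset.Ico_subset_Ico_right (by omega))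
          fun _ _ _ ↦ by positivity
    _ = ∑ j ∈ Finset.Ioo 0 N, ((j : ℝ) ^ 2)⁻¹ := by
        rw [Finset.sum_Ico_add_right_sub_eq (f := fun j : ℕ ↦ ((j : ℝ) ^ 2)⁻¹) 1 N a,
          ← Finset.Ico_add_one_left_eq_Ioo, zero_add]
    _ ≤ 2 := by simpa using sum_Ioo_inv_sq_le (α := ℝ) 0 N

section ChebyshevWeight

variable {g : ℝ → ℝ} (hg0 : ∀ x ∈ Icc (-1 : ℝ) 1, 0 ≤ g x)
  (hgmono : MonotoneOn g (Icc (-1 : ℝ) 1))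
include hg0 hgmono

theorem monotoneOn_div_sqrt_one_sub : MonotoneOn (fun s ↦ g s / √(1 - s)) (Ico (-1) 1) :=
  fun x hx y hy hxy ↦ div_le_div₀ (hg0 y (Ico_subset_Icc_self hy))
    (hgmono (Ico_subset_Icc_self hx) (Ico_subset_Icc_self hy) hxy)
    (sqrt_pos.2 (by linarith [hy.2])) (sqrt_le_sqrt (by linarith))

theorem integral_div_sqrt_one_sub_sq_le {a b : ℝ} (ha : -1 < a) (hab : a ≤ b) (hb : b < 1)
    (hint : IntervalIntegrable (fun s ↦ g s / √(1 - s ^ 2)) volume a b) :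
    ∫ s in a..b, g s / √(1 - s ^ 2) ≤ g b / √(1 - b) * (2 * √(1 + b) - 2 * √(1 + a)) := by
  rw [← integral_inv_sqrt_one_add ha hab, ← intervalIntegral.integral_const_mul]
  refine intervalIntegral.integral_mono_on hab hint
    (intervalIntegrable_inv_sqrt_one_add ha hab |>.const_mul _) fun s hs ↦ ?_
  rw [div_sqrt_one_sub_sq _ (by linarith [hs.2])]
  refine mul_le_mul_of_nonneg_right ?_ (by positivity)
  exact monotoneOn_div_sqrt_one_sub hg0 hgmono ⟨by linarith [hs.1], by linarith [hs.2]⟩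
    ⟨by linarith, hb⟩ hs.2

theorem le_integral_div_sqrt_one_sub_sq {b c : ℝ} (hb : -1 < b) (hbc : b ≤ c) (hc : c ≤ 1)
    (hint : IntervalIntegrable (fun s ↦ g s / √(1 - s ^ 2)) volume b c) :
    g b / √(1 - b) * (2 * √(1 + c) - 2 * √(1 + b)) ≤ ∫ s in b..c, g s / √(1 - s ^ 2) := by
  rw [← integral_inv_sqrt_one_add hb hbc, ← intervalIntegral.integral_const_mul]
  -- only on the open interval: if `c = 1`, the integrand is `g 1 / √0 = 0` at the endpoint
  refine intervalIntegral.integral_mono_on_of_le_Ioo hbc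
    (intervalIntegrable_inv_sqrt_one_add hb hbc |>.const_mul _) hint fun s hs ↦ ?_
  rw [div_sqrt_one_sub_sq _ (by linarith [hs.2])]
  refine mul_le_mul_of_nonneg_right ?_ (by positivity)
  exact monotoneOn_div_sqrt_one_sub hg0 hgmono ⟨hb.le, by linarith [hs.1, hs.2]⟩
    ⟨by linarith [hs.1], by linarith [hs.2]⟩ hs.1.le

theorem sub_div_sub_le_of_integral_eq_mul {a b c m : ℝ} (ha : -1 < a) (hab : a < b) (hbc : b < c)
    (hc : c ≤ 1) (hm : 1 ≤ m)
    (hint : IntervalIntegrable (fun s ↦ g s / √(1 - s ^ 2)) volume a c)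
    (hpos : 0 < ∫ s in b..c, g s / √(1 - s ^ 2))
    (hmass : ∫ s in a..b, g s / √(1 - s ^ 2) = m * ∫ s in b..c, g s / √(1 - s ^ 2)) :
    (c - b) / (b - a) ≤ 3 / m := by
  have hb : b ∈ uIcc a c := by rw [uIcc_of_le (hab.trans hbc).le]; exact ⟨hab.le, hbc.le⟩
  have hL := integral_div_sqrt_one_sub_sq_le hg0 hgmono ha hab.le (hbc.trans_le hc)
    (hint.mono_set (uIcc_subset_uIcc_left hb))
  have hR := le_integral_div_sqrt_one_sub_sq hg0 hgmono (ha.trans hab) hbc.le hc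
    (hint.mono_set (uIcc_subset_uIcc_right hb))
  set φ := g b / √(1 - b)
  have hAB : √(1 + a) < √(1 + b) := sqrt_lt_sqrt (by linarith) (by linarith)
  have hBC : √(1 + b) ≤ √(1 + c) := sqrt_le_sqrt (by linarith)
  have hφ : 0 < φ := by nlinarith
  have hgap : m * (√(1 + c) - √(1 + b)) ≤ √(1 + b) - √(1 + a) := by
    refine le_of_mul_le_mul_left ?_ hφ
    nlinarith [mul_le_mul_of_nonneg_left hR (by linarith : (0 : ℝ) ≤ m)]
  have key := sq_sub_sq_div_sq_sub_sq_le (sqrt_nonneg _) hAB hBC hm hgap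
  rwa [sq_sqrt (by linarith), sq_sqrt (by linarith), sq_sqrt (by linarith),
    add_sub_add_left_eq_sub, add_sub_add_left_eq_sub] at key

theorem sq_sub_div_sub_le_of_integral_eq {t : ℕ → ℝ} {k : ℕ} {δ : ℝ} (hδ : 0 < δ)
    (ht0 : t 0 = -1) (htk : t k ≤ 1) (htmono : ∀ i j : ℕ, i < j → j ≤ k → t i < t j)
    (hF : ∀ j ≤ k, ∫ s in (-1 : ℝ)..t j, g s / √(1 - s ^ 2) = j * δ)
    {i j : ℕ} (hi : 0 < i) (hij : i < j) (hjk : j < k) :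
    ((t (j + 1) - t j) / (t j - t i)) ^ 2 ≤ 9 * (((j - i : ℕ) : ℝ) ^ 2)⁻¹ := by
  have hk : (0 : ℝ) < k := by exact_mod_cast (by omega : 0 < k)
  have hint : IntervalIntegrable (fun s ↦ g s / √(1 - s ^ 2)) volume (-1) (t k) :=
    intervalIntegral.intervalIntegrable_of_integral_ne_zero (by rw [hF k le_rfl]; positivity)
  have hle : ∀ l l', l ≤ l' → l' ≤ k → t l ≤ t l' := fun l l' hll' hl' ↦
    hll'.eq_or_lt.elim (fun h ↦ h ▸ le_rfl) fun h ↦ (htmono l l' h hl').le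
  have hmem : ∀ l ≤ k, t l ∈ uIcc (-1) (t k) := fun l hl ↦ by
    rw [uIcc_of_le (ht0 ▸ hle 0 k (Nat.zero_le _) le_rfl)]
    exact ⟨ht0 ▸ hle 0 l (Nat.zero_le _) hl, hle l k hl le_rfl⟩
  have hmass : ∀ l l', l ≤ l' → l' ≤ k →
      ∫ s in t l..t l', g s / √(1 - s ^ 2) = ((l' - l : ℕ) : ℝ) * δ := fun l l' hll' hl' ↦ by
    rw [← intervalIntegral.integral_interval_sub_left
      (hint.mono_set (uIcc_subset_uIcc_left (hmem l' hl')))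
      (hint.mono_set (uIcc_subset_uIcc_left (hmem l (hll'.trans hl')))),
      hF l' hl', hF l (hll'.trans hl'), Nat.cast_sub hll']
    ring
  have hm : (1 : ℝ) ≤ (j - i : ℕ) := by exact_mod_cast (by omega : 1 ≤ j - i)
  have hratio := sub_div_sub_le_of_integral_eq_mul hg0 hgmono
    (ht0 ▸ htmono 0 i hi (by omega)) (htmono i j hij hjk.le) (htmono j (j + 1) (by omega) hjk)
    ((hle (j + 1) k hjk le_rfl).trans htk) hm
    (hint.mono_set (uIcc_subset_uIcc (hmem i (by omega)) (hmem (j + 1) hjk)))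
    (by rw [hmass j (j + 1) (by omega) hjk]; simp [hδ])
    (by rw [hmass i j hij.le hjk.le, hmass j (j + 1) (by omega) hjk]; simp)
  calc ((t (j + 1) - t j) / (t j - t i)) ^ 2 ≤ (3 / ((j - i : ℕ) : ℝ)) ^ 2 :=
        pow_le_pow_left₀ (div_nonneg (by linarith [htmono j (j + 1) (by omega) hjk])
          (by linarith [htmono i j hij hjk.le])) hratio 2
    _ = 9 * (((j - i : ℕ) : ℝ) ^ 2)⁻¹ := by ring

end ChebyshevWeight

theorem stmt_18_general (k : ℕ) (g : ℝ → ℝ)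
    (hg0 : ∀ x ∈ Set.Icc (-1:ℝ) 1, 0 ≤ g x)
    (hgmono : MonotoneOn g (Set.Icc (-1:ℝ) 1))
    (t : ℕ → ℝ)
    (ht0 : t 0 = -1)
    (htmem : ∀ j ≤ k, t j ∈ Set.Icc (-1:ℝ) 1)
    (htmono : ∀ i j : ℕ, i < j → j ≤ k → t i < t j)
    (htW : ∀ j ≤ k,
      ((k : ℝ) / π) * ∫ s in (-1:ℝ)..(t j), g s / Real.sqrt (1 - s ^ 2) = (j : ℝ))
    :
    ∀ j₀ : ℕ, j₀ < k →
      (1 / 4) * ∑ j ∈ Finset.Ico (j₀ + 2) k,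
        (t (j + 1) - t j) ^ 2 / (t j - t (j₀ + 1)) ^ 2 ≤ 872 := by
  intro j₀ hj₀
  have hk : (0 : ℝ) < k := by exact_mod_cast (by omega : 0 < k)
  have hF : ∀ j ≤ k, ∫ s in (-1 : ℝ)..t j, g s / √(1 - s ^ 2) = j * (π / k) := fun j hj ↦ by
    rw [← htW j hj]
    field_simp
  calc (1 / 4) * ∑ j ∈ Finset.Ico (j₀ + 2) k, (t (j + 1) - t j) ^ 2 / (t j - t (j₀ + 1)) ^ 2
      ≤ (1 / 4) * ∑ j ∈ Finset.Ico (j₀ + 1 + 1) k, 9 * (((j - (j₀ + 1) : ℕ) : ℝ) ^ 2)⁻¹ := by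
        gcongr with j hj
        rw [← div_pow]
        exact sq_sub_div_sub_le_of_integral_eq hg0 hgmono (by positivity) ht0
          (htmem k le_rfl).2 htmono hF (by omega) (Finset.mem_Ico.1 hj).1 (Finset.mem_Ico.1 hj).2
    _ ≤ (1 / 4) * (9 * 2) := by
        rw [← Finset.mul_sum]
        gcongr
        exact sum_Ico_inv_sq_sub_le _ _
    _ ≤ 872 := by norm_num

theorem stmt_18 (k : ℕ) (hk : 2 ≤ k) (g : ℝ → ℝ)
    (hg0 : ∀ x ∈ Set.Icc (-1:ℝ) 1, 0 ≤ g x)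
    (hgmono : MonotoneOn g (Set.Icc (-1:ℝ) 1))
    (hgconc : ConcaveOn ℝ (Set.Icc (-1:ℝ) 1) g)
    (hgconv : ConvexOn ℝ (Set.Ioo (-1:ℝ) 1) (fun s => g s / (1 + s)))
    (hnorm : (1 / π) * ∫ s in (-1:ℝ)..1, g s / Real.sqrt (1 - s ^ 2) = 1)
    (t : ℕ → ℝ)
    (ht0 : t 0 = -1) (htk : t k = 1)
    (htmem : ∀ j ≤ k, t j ∈ Set.Icc (-1:ℝ) 1)
    (htmono : ∀ i j : ℕ, i < j → j ≤ k → t i < t j)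
    (htW : ∀ j ≤ k,
      ((k : ℝ) / π) * ∫ s in (-1:ℝ)..(t j), g s / Real.sqrt (1 - s ^ 2) = (j : ℝ))
    :
    ∀ j₀ : ℕ, j₀ < k →
      (1 / 4) * ∑ j ∈ Finset.Ico (j₀ + 2) k,
        (t (j + 1) - t j) ^ 2 / (t j - t (j₀ + 1)) ^ 2 ≤ 872 :=
  stmt_18_general k g hg0 hgmono t ht0 htmem htmono htW
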